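/- arXiv:2311.13299 — 3 statements merged into one kernel-verified Lean document; each statement's English description precedes it below -/
import Mathlib

section
/- Let p be a prime number, K a field of characteristic p, and N a positive integer. Then every finitely generated subgroup of GL_N(K) all of whose elements are upper unitriangular matrices is finite. -/
open scoped MatrixGroups
open Pointwise

private lemma aux_finite_span (p : ℕ) (hp : p.Prime) (K : Type*) [Field K]
    [Module (ZMod p) K] {s : Set K} (hs : s.Finite) :
    Finite (Submodule.span (ZMod p) s) := by
  haveI : NeZero p := ⟨hp.ne_zero⟩
  haveI : Module.Finite (ZMod p) (Submodule.span (ZMod p) s) :=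
    Module.Finite.span_of_finite (ZMod p) hs
  exact Module.finite_of_finite (ZMod p)

/-- Let `p` be a prime, `K` a field of characteristic `p`, `N` a positive integer.
Every finitely generated subgroup of `GL N K` all of whose elements are
upper unitriangular matrices is finite. -/
theorem stmt_0 (p : ℕ) (hp : p.Prime) (K : Type*) [Field K] [CharP K p]
    (N : ℕ) (hN : 0 < N) (H : Subgroup (GL (Fin N) K)) (hfg : H.FG)
    (htri : ∀ A ∈ H, (∀ i : Fin N, (A : Matrix (Fin N) (Fin N) K) i i = 1) ∧
      (∀ i j : Fin N, j < i → (A : Matrix (Fin N) (Fin N) K) i j = 0)) :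
    Finite H := by
  classical
  haveI : Fact p.Prime := ⟨hp⟩
  letI : Algebra (ZMod p) K := ZMod.algebra K p
  obtain ⟨S, hS⟩ := hfg
  -- symmetric generating set (as a set)
  set T : Set (GL (Fin N) K) := (↑S : Set (GL (Fin N) K)) ∪ (↑S : Set (GL (Fin N) K))⁻¹ with hT
  have hTfin : T.Finite := (S.finite_toSet).union (S.finite_toSet.inv)
  have hTH : ∀ A ∈ T, A ∈ H := by
    intro A hA
    rcases hA with hA | hA
    · exact hS ▸ Subgroup.subset_closure hA
    · exact hS ▸ Subgroup.inv_subset_closure _ hA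
  -- the set of all entries of generators
  set E : Set K := ⋃ A ∈ T, Set.range (fun q : Fin N × Fin N =>
    ((A : Matrix (Fin N) (Fin N) K) q.1 q.2)) with hE
  have hEfin : E.Finite := Set.Finite.biUnion hTfin (fun A _ => Set.finite_range _)
  -- products of at most k entries
  let P : ℕ → Set K := fun k => Nat.rec {1} (fun _ Pk => Pk ∪ E * Pk) k
  have hP0 : P 0 = {1} := rfl
  have hPsucc : ∀ k, P (k + 1) = P k ∪ E * P k := fun k => rfl
  have hPfin : ∀ k, (P k).Finite := by
    intro k
    induction k with
    | zero => exact Set.finite_singleton 1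
    | succ k ih => exact ih.union (hEfin.mul ih)
  have hPmono : Monotone P := monotone_nat_of_le_succ (fun k => by
    rw [hPsucc]; exact Set.subset_union_left)
  have hPmul : ∀ a b : ℕ, ∀ x ∈ P a, ∀ y ∈ P b, x * y ∈ P (a + b) := by
    intro a
    induction a with
    | zero =>
      intro b x hx y hy
      rw [hP0] at hx; rw [Set.mem_singleton_iff] at hx
      subst hx; rw [one_mul, Nat.zero_add]; exact hy
    | succ a ih =>
      intro b x hx y hy
      rw [hPsucc] at hx
      rcases hx with hx | hx
      · exact hPmono (by omega) (ih b x hx y hy)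
      · obtain ⟨e, he, z, hz, rfl⟩ := hx
        have : z * y ∈ P (a + b) := ih b z hz y hy
        have : e * (z * y) ∈ E * P (a + b) := Set.mul_mem_mul he this
        rw [mul_assoc]
        have heq : a + 1 + b = (a + b) + 1 := by omega
        rw [heq, hPsucc]
        exact Or.inr this
  -- spans
  let V : ℕ → Submodule (ZMod p) K := fun k => Submodule.span (ZMod p) (P k)
  have hVmono : ∀ {a b : ℕ}, a ≤ b → V a ≤ V b := fun h =>
    Submodule.span_mono (hPmono h)
  have hVmul : ∀ a b : ℕ, ∀ x ∈ V a, ∀ y ∈ V b, x * y ∈ V (a + b) := by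
    intro a b x hx y hy
    have h1 : x * y ∈ V a * V b := Submodule.mul_mem_mul hx hy
    have h2 : V a * V b = Submodule.span (ZMod p) (P a * P b) :=
      Submodule.span_mul_span _ _ _
    rw [h2] at h1
    refine Submodule.span_le.2 ?_ h1
    intro z hz
    obtain ⟨u, hu, v, hv, rfl⟩ := hz
    exact Submodule.subset_span (hPmul a b u hu v hv)
  have h1V : ∀ k, (1 : K) ∈ V k :=
    fun k => Submodule.subset_span (hPmono (Nat.zero_le k) rfl)
  -- main claim: all entries of elements of H lie in V N
  have key : ∀ A ∈ H, ∀ i j : Fin N,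
      (i : ℕ) < (j : ℕ) → (A : Matrix (Fin N) (Fin N) K) i j ∈ V ((j : ℕ) - (i : ℕ)) := by
    intro A hA
    have hA' : A ∈ Submonoid.closure T := by
      have : A ∈ (Subgroup.closure (↑S : Set (GL (Fin N) K))).toSubmonoid := hS ▸ hA
      rwa [Subgroup.closure_toSubmonoid] at this
    induction hA' using Submonoid.closure_induction with
    | mem x hx =>
      intro i j hij
      have hx1 : (x : Matrix (Fin N) (Fin N) K) i j ∈ E :=
        Set.mem_biUnion hx ⟨(i, j), rfl⟩
      have hmem : (x : Matrix (Fin N) (Fin N) K) i j ∈ P 1 := by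
        show (x : Matrix (Fin N) (Fin N) K) i j ∈ P (0 + 1)
        rw [hPsucc 0, hP0]
        exact Or.inr ⟨_, hx1, 1, rfl, mul_one _⟩
      exact hVmono (by omega : 1 ≤ (j : ℕ) - (i : ℕ)) (Submodule.subset_span hmem)
    | one =>
      intro i j hij
      have : ((1 : GL (Fin N) K) : Matrix (Fin N) (Fin N) K) i j = 0 := by
        simp [Matrix.one_apply, Fin.ext_iff, hij.ne]
      rw [this]; exact Submodule.zero_mem _
    | mul x y hx hy ihx ihy =>
      intro i j hij
      have hclH : Submonoid.closure T ≤ H.toSubmonoid :=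
        Submonoid.closure_le.2 (fun a ha => hTH a ha)
      have hxH : x ∈ H := hclH hx
      have hyH : y ∈ H := hclH hy
      obtain ⟨hxd, hxl⟩ := htri x hxH
      obtain ⟨hyd, hyl⟩ := htri y hyH
      have hmul : ((x * y : GL (Fin N) K) : Matrix (Fin N) (Fin N) K) i j =
          ∑ k : Fin N, (x : Matrix (Fin N) (Fin N) K) i k *
            (y : Matrix (Fin N) (Fin N) K) k j := by
        rw [Units.val_mul, Matrix.mul_apply]
      rw [hmul]
      apply Submodule.sum_mem
      intro k _
      rcases lt_trichotomy (k : ℕ) (i : ℕ) with hk | hk | hk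
      · rw [hxl i k (by rwa [Fin.lt_iff_val_lt_val]), zero_mul]
        exact Submodule.zero_mem _
      · have hkeq : k = i := Fin.ext hk
        subst hkeq
        rw [hxd k, one_mul]
        exact ihy hyH k j hij
      · rcases lt_trichotomy (k : ℕ) (j : ℕ) with hkj | hkj | hkj
        · have h1 := ihx hxH i k hk
          have h2 := ihy hyH k j hkj
          have := hVmul _ _ _ h1 _ h2
          have heq : (k : ℕ) - (i : ℕ) + ((j : ℕ) - (k : ℕ)) = (j : ℕ) - (i : ℕ) := by omega
          rwa [heq] at this
        · have hkeq : k = j := Fin.ext hkj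
          subst hkeq
          rw [hyd k, mul_one]
          exact ihx hxH i k hk
        · rw [hyl k j (by rwa [Fin.lt_iff_val_lt_val]), mul_zero]
          exact Submodule.zero_mem _
  -- all entries lie in V N
  have key2 : ∀ A ∈ H, ∀ i j : Fin N,
      (A : Matrix (Fin N) (Fin N) K) i j ∈ V N := by
    intro A hA i j
    rcases lt_trichotomy (i : ℕ) (j : ℕ) with h | h | h
    · exact hVmono (by omega) (key A hA i j h)
    · have : i = j := Fin.ext h
      subst this
      rw [(htri A hA).1 i]
      exact h1V N
    · rw [(htri A hA).2 i j (by rwa [Fin.lt_iff_val_lt_val])]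
      exact Submodule.zero_mem _
  -- V N is finite as a set
  have hfinV : Finite (V N) := aux_finite_span p hp K (hPfin N)
  -- inject H into matrices with entries in V N
  let f : H → (Fin N → Fin N → (V N)) := fun A i j =>
    ⟨(A.1 : Matrix (Fin N) (Fin N) K) i j, key2 A.1 A.2 i j⟩
  have hf : Function.Injective f := by
    intro A B hAB
    ext i j
    · exact congrArg Subtype.val (congrFun (congrFun hAB i) j)
  exact Finite.of_injective f hf
end

section
/- Let p be a prime number, K a field of characteristic p, Γ a finitely generated group, V a finite-dimensional K-vector space, and ϱ : Γ → GL(V) a group homomorphism. Suppose there exists a finite chain of Γ-invariant subspaces 0 = V_0 ⊆ V_1 ⊆ ⋯ ⊆ V_m = V such that for each i = 1, …, m the induced representation of Γ on the quotient V_i/V_{i-1} has finite image. Then ϱ(Γ) is finite. -/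
section AuxStmt2

variable {K : Type*} [Field K] {V : Type*} [AddCommGroup V] [Module K V]

/-- Linear maps shifting a `ℤ`-indexed flag down by `k`. -/
def shiftIdeal (F : ℤ → Submodule K V) (k : ℕ) : Submodule K (V →ₗ[K] V) where
  carrier := {f | ∀ (n : ℤ), ∀ v ∈ F n, f v ∈ F (n - k)}
  add_mem' := fun hf hg n v hv => by
    simpa using Submodule.add_mem _ (hf n v hv) (hg n v hv)
  zero_mem' := fun n v hv => by simp
  smul_mem' := fun c f hf n v hv => by
    simpa using Submodule.smul_mem _ c (hf n v hv)

theorem aux_finite (p : ℕ) (hp : p.Prime) [CharP K p]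
    (F : ℤ → Submodule K V) (hFmono : Monotone F)
    (hFbot : ∀ n : ℤ, n ≤ 0 → F n = ⊥) (M : ℤ) (hFtop : ∀ n : ℤ, M ≤ n → F n = ⊤) :
    ∀ (d k : ℕ), 1 ≤ k → M ≤ ((k + d : ℕ) : ℤ) →
      ∀ G : Subgroup (V →ₗ[K] V)ˣ, Group.FG G →
        (∀ g ∈ G, ∀ (n : ℤ), ∀ v ∈ F n, (g : V →ₗ[K] V) v ∈ F n) →
        (∀ g ∈ G, ((g : V →ₗ[K] V) - 1) ∈ shiftIdeal F k) → Finite G := by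
  intro d
  induction d with
  | zero =>
    intro k hk hM G _ _ hshift
    have hone : ∀ g : G, (g : (V →ₗ[K] V)ˣ) = 1 := by
      intro g
      ext v
      have hv : v ∈ F M := by rw [hFtop M le_rfl]; trivial
      have h0 := hshift (g : (V →ₗ[K] V)ˣ) g.2 M v hv
      rw [hFbot (M - k) (by push_cast at hM ⊢; omega : M - (k:ℤ) ≤ 0)] at h0
      simp only [Submodule.mem_bot, LinearMap.sub_apply, Module.End.one_apply,
        sub_eq_zero] at h0
      simpa using h0
    have : Subsingleton G := ⟨fun a b => Subtype.ext ((hone a).trans (hone b).symm)⟩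
    exact Finite.of_subsingleton
  | succ d ih =>
    intro k hk hM G hFG hpres hshift
    by_cases hM' : M ≤ ((k + d : ℕ) : ℤ)
    · exact ih k hk hM' G hFG hpres hshift
    haveI := hFG
    set ε : G → (V →ₗ[K] V) := fun g => ((g : (V →ₗ[K] V)ˣ) : V →ₗ[K] V) with hε
    have εmul : ∀ a b : G, ε (a * b) = ε a * ε b := fun a b => rfl
    have hhom : ∀ a b : G,
        Submodule.Quotient.mk (p := shiftIdeal F (k + 1)) (ε (a * b) - 1)
          = Submodule.Quotient.mk (ε a - 1) + Submodule.Quotient.mk (ε b - 1) := by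
      intro a b
      rw [← Submodule.Quotient.mk_add, Submodule.Quotient.eq]
      have hab : (ε (a * b) - 1) - ((ε a - 1) + (ε b - 1))
          = (ε a - 1) * (ε b - 1) := by
        rw [εmul]; noncomm_ring
      rw [hab]
      intro n v hv
      have h1 := hshift ((b : (V →ₗ[K] V)ˣ)) b.2 n v hv
      have h2 := hshift ((a : (V →ₗ[K] V)ˣ)) a.2 (n - k) _ h1
      rw [Module.End.mul_apply]
      exact hFmono (by push_cast; omega : n - (k:ℤ) - k ≤ n - ((k:ℕ)+1 : ℕ)) h2
    let φ : G →* Multiplicative ((V →ₗ[K] V) ⧸ shiftIdeal F (k + 1)) := MonoidHom.mk'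
      (fun g => Multiplicative.ofAdd (Submodule.Quotient.mk (ε g - 1)))
      (fun a b => by
        show Multiplicative.ofAdd (Submodule.Quotient.mk (ε (a * b) - 1)) = _
        rw [hhom a b, ofAdd_add])
    have hrange_fin : Finite φ.range := by
      haveI : Group.FG φ.range := Group.fg_of_surjective φ.rangeRestrict_surjective
      apply CommGroup.finite_of_fg_torsion
      rintro ⟨y, g, rfl⟩
      refine isOfFinOrder_iff_pow_eq_one.mpr ⟨p, hp.pos, ?_⟩
      apply Subtype.ext
      push_cast
      show (φ g) ^ p = 1
      have h3 : φ g = Multiplicative.ofAdd (Submodule.Quotient.mk (ε g - 1)) := rfl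
      rw [h3, ← ofAdd_nsmul, ← Nat.cast_smul_eq_nsmul K p, CharP.cast_eq_zero,
        zero_smul, ofAdd_zero]
    haveI hki : φ.ker.FiniteIndex := by
      constructor
      rw [Subgroup.index_ker]
      exact Nat.card_ne_zero.mpr ⟨⟨1, one_mem _⟩, hrange_fin⟩
    haveI : Group.FG φ.ker := Subgroup.fg_of_index_ne_zero _
    set e : φ.ker →* (V →ₗ[K] V)ˣ := G.subtype.comp φ.ker.subtype with he
    haveI : Group.FG e.range := Group.fg_of_surjective e.rangeRestrict_surjective
    have hker_shift : ∀ x : φ.ker, (ε (x : G) - 1) ∈ shiftIdeal F (k + 1) := by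
      intro x
      have hx : φ (x : G) = 1 := x.2
      have h4 : Submodule.Quotient.mk (p := shiftIdeal F (k+1)) (ε (x : G) - 1) = 0 :=
        Multiplicative.ofAdd.injective (hx.trans (ofAdd_zero).symm)
      exact (Submodule.Quotient.mk_eq_zero _).mp h4
    have hfin_r : Finite e.range := by
      refine ih (k + 1) (by omega) (by push_cast at hM ⊢; omega) e.range inferInstance
        ?_ ?_
      · rintro g ⟨x, rfl⟩ n v hv
        exact hpres _ (x : G).2 n v hv
      · rintro g ⟨x, rfl⟩
        exact hker_shift x
    have hker_fin : Finite φ.ker := by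
      refine Finite.of_injective (fun x : φ.ker => (⟨e x, ⟨x, rfl⟩⟩ : e.range)) ?_
      intro a b h
      have h' := congrArg Subtype.val h
      simp only [] at h'
      exact Subtype.ext (Subtype.ext h')
    have hq_fin : Finite (G ⧸ φ.ker) :=
      Finite.of_equiv _ (QuotientGroup.quotientKerEquivRange φ).symm.toEquiv
    exact Finite.of_equiv _ (Subgroup.groupEquivQuotientProdSubgroup (s := φ.ker)).symm

end AuxStmt2

/-- Let `K` be a field of characteristic `p > 0`, `Γ` a finitely generated group,
`V` a finite-dimensional `K`-vector space, `ϱ : Γ → GL(V)` a group homomorphism.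
Suppose there is a chain of `Γ`-invariant subspaces `0 = V_0 ⊆ ⋯ ⊆ V_m = V` such
that the induced representation of `Γ` on each quotient `V_i/V_{i-1}` has finite
image (encoded: there are finitely many `γ` up to the equivalence
`ϱ(γ)v - ϱ(γ')v ∈ V_{i-1}` for all `v ∈ V_i`). Then `ϱ(Γ)` is finite. -/
theorem stmt_2 (p : ℕ) (hp : p.Prime) (K : Type*) [Field K] [CharP K p]
    (Γ : Type*) [Group Γ] [Group.FG Γ]
    (V : Type*) [AddCommGroup V] [Module K V] [FiniteDimensional K V]
    (ϱ : Γ →* (V →ₗ[K] V)ˣ)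
    (m : ℕ) (W : Fin (m + 1) → Submodule K V) (hmono : Monotone W)
    (hbot : W 0 = ⊥) (htop : W (Fin.last m) = ⊤)
    (hinv : ∀ (i : Fin (m + 1)) (γ : Γ), ∀ v ∈ W i, (ϱ γ : V →ₗ[K] V) v ∈ W i)
    (hquot : ∀ i : Fin m, ∃ S : Finset Γ, ∀ γ : Γ, ∃ s ∈ S,
      ∀ v ∈ W i.succ, (ϱ γ : V →ₗ[K] V) v - (ϱ s : V →ₗ[K] V) v ∈ W i.castSucc) :
    Finite ϱ.range := by
  classical
  -- the flag, indexed by `ℤ`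
  set F : ℤ → Submodule K V := fun n =>
    if n ≤ 0 then ⊥ else if h : n ≤ (m : ℤ) then W ⟨n.toNat, by omega⟩ else ⊤ with hF
  have hFbot : ∀ n : ℤ, n ≤ 0 → F n = ⊥ := by
    intro n hn; simp only [hF]; rw [if_pos hn]
  have hFnat : ∀ (n : ℤ) (h0 : 0 ≤ n) (hm : n ≤ (m : ℤ)), F n = W ⟨n.toNat, by omega⟩ := by
    intro n h0 hm
    by_cases h1 : n = 0
    · subst h1
      rw [hFbot 0 le_rfl]
      have he0 : (⟨(0:ℤ).toNat, by omega⟩ : Fin (m+1)) = 0 := by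
        apply Fin.ext; simp
      rw [he0, hbot]
    · simp only [hF]
      rw [if_neg (by omega), dif_pos hm]
  have hFtop : ∀ n : ℤ, (m : ℤ) ≤ n → F n = ⊤ := by
    intro n hn
    by_cases h1 : n ≤ (m : ℤ)
    · have hnm : n = (m : ℤ) := le_antisymm h1 hn
      subst hnm
      rw [hFnat _ (by omega) le_rfl]
      have : (⟨((m:ℤ)).toNat, by omega⟩ : Fin (m+1)) = Fin.last m := by
        apply Fin.ext; simp [Fin.last]
      rw [this, htop]
    · simp only [hF]
      rw [if_neg (by omega), dif_neg h1]
  have hFmono : Monotone F := by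
    intro a b hab
    by_cases ha : a ≤ 0
    · rw [hFbot a ha]; exact bot_le
    by_cases hb : b ≤ (m : ℤ)
    · rw [hFnat a (by omega) (by omega), hFnat b (by omega) hb]
      exact hmono (by simp only [Fin.mk_le_mk]; omega)
    · rw [hFtop b (by omega)]; exact le_top
  have hFinv : ∀ (γ : Γ) (n : ℤ), ∀ v ∈ F n, (ϱ γ : V →ₗ[K] V) v ∈ F n := by
    intro γ n v hv
    by_cases h0 : n ≤ 0
    · rw [hFbot n h0] at hv ⊢
      simp only [Submodule.mem_bot] at hv ⊢
      rw [hv, map_zero]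
    by_cases h1 : n ≤ (m : ℤ)
    · rw [hFnat n (by omega) h1] at hv ⊢
      exact hinv _ γ v hv
    · rw [hFtop n (by omega)]; trivial
  -- the subgroup acting trivially on all graded quotients
  set Δ : Subgroup Γ :=
    { carrier := {γ | ∀ n : ℤ, ∀ v ∈ F n, (ϱ γ : V →ₗ[K] V) v - v ∈ F (n - 1)}
      one_mem' := by
        intro n v hv
        simp only [map_one, Units.val_one, Module.End.one_apply, sub_self]
        exact Submodule.zero_mem _
      mul_mem' := by
        intro a b ha hb n v hv
        have key : (ϱ (a * b) : V →ₗ[K] V) v - v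
            = ((ϱ a : V →ₗ[K] V) ((ϱ b : V →ₗ[K] V) v) - (ϱ b : V →ₗ[K] V) v)
              + ((ϱ b : V →ₗ[K] V) v - v) := by
          rw [map_mul, Units.val_mul, Module.End.mul_apply]; abel
        rw [key]
        exact Submodule.add_mem _ (ha n _ (hFinv b n v hv)) (hb n v hv)
      inv_mem' := by
        intro a ha n v hv
        have hfix : (ϱ a⁻¹ : V →ₗ[K] V) ((ϱ a : V →ₗ[K] V) v) = v := by
          rw [← Module.End.mul_apply, ← Units.val_mul, ← map_mul, inv_mul_cancel,
            map_one, Units.val_one, Module.End.one_apply]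
        have key : (ϱ a⁻¹ : V →ₗ[K] V) v - v
            = (ϱ a⁻¹ : V →ₗ[K] V) (v - (ϱ a : V →ₗ[K] V) v) := by
          rw [map_sub, hfix]
        rw [key]
        refine hFinv a⁻¹ (n - 1) _ ?_
        have : v - (ϱ a : V →ₗ[K] V) v = -((ϱ a : V →ₗ[K] V) v - v) := by abel
        rw [this]
        exact Submodule.neg_mem _ (ha n v hv) } with hΔ
  -- choice of coset representatives data
  choose S hS using hquot
  choose σ hσ1 hσ2 using hS
  -- if σ agrees on two elements, they are in the same left coset of Δ
  have hc : ∀ γ γ' : Γ, (∀ i : Fin m, σ i γ = σ i γ') → γ⁻¹ * γ' ∈ Δ := by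
    intro γ γ' hσe n v hv
    have hdiff : (ϱ γ' : V →ₗ[K] V) v - (ϱ γ : V →ₗ[K] V) v ∈ F (n - 1) := by
      by_cases h0 : n ≤ 0
      · rw [hFbot n h0] at hv
        simp only [Submodule.mem_bot] at hv
        rw [hv]
        simp only [map_zero, sub_zero]
        exact Submodule.zero_mem _
      by_cases h1 : n ≤ (m : ℤ)
      · set i : Fin m := ⟨n.toNat - 1, by omega⟩ with hi
        have hvW : v ∈ W i.succ := by
          have : F n = W i.succ := by
            rw [hFnat n (by omega) h1]
            congr 1
            apply Fin.ext
            simp only [Fin.val_succ, hi]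
            omega
          rwa [this] at hv
        have hgoal : F (n - 1) = W i.castSucc := by
          rw [hFnat (n-1) (by omega) (by omega)]
          congr 1
          apply Fin.ext
          simp only [Fin.coe_castSucc, hi]
          omega
        rw [hgoal]
        have h2 := hσ2 i γ v hvW
        have h3 := hσ2 i γ' v hvW
        rw [hσe i] at h2
        have := Submodule.sub_mem _ h3 h2
        simpa using this
      · rw [hFtop (n-1) (by omega)]; trivial
    have key : (ϱ (γ⁻¹ * γ') : V →ₗ[K] V) v - v
        = (ϱ γ⁻¹ : V →ₗ[K] V) ((ϱ γ' : V →ₗ[K] V) v - (ϱ γ : V →ₗ[K] V) v) := by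
      have hfix : (ϱ γ⁻¹ : V →ₗ[K] V) ((ϱ γ : V →ₗ[K] V) v) = v := by
        rw [← Module.End.mul_apply, ← Units.val_mul, ← map_mul, inv_mul_cancel,
          map_one, Units.val_one, Module.End.one_apply]
      rw [map_sub, hfix, map_mul, Units.val_mul, Module.End.mul_apply]
    rw [key]
    exact hFinv γ⁻¹ (n - 1) _ hdiff
  -- Δ has finite index
  have hquot_fin : Finite (Γ ⧸ Δ) := by
    refine Finite.of_injective
      (fun q : Γ ⧸ Δ => (fun i => (⟨σ i q.out, hσ1 i q.out⟩ : (S i : Set Γ)))) ?_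
    intro q q' h
    have hσe : ∀ i : Fin m, σ i q.out = σ i q'.out := by
      intro i
      exact Subtype.ext_iff.mp (congrFun h i)
    have := hc q.out q'.out hσe
    have h2 : (q.out : Γ ⧸ Δ) = (q'.out : Γ ⧸ Δ) := (QuotientGroup.eq).mpr this
    rwa [QuotientGroup.out_eq', QuotientGroup.out_eq'] at h2
  haveI hFI : Δ.FiniteIndex := by
    constructor
    rw [Subgroup.index]
    exact Nat.card_ne_zero.mpr ⟨inferInstance, hquot_fin⟩
  haveI : Group.FG Δ := Subgroup.fg_of_index_ne_zero _
  -- the image of Δ in GL(V) is finite, by the key lemma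
  set e2 : Δ →* (V →ₗ[K] V)ˣ := ϱ.comp Δ.subtype with he2
  haveI : Group.FG e2.range := Group.fg_of_surjective e2.rangeRestrict_surjective
  have hGQfin : Finite e2.range := by
    refine aux_finite p hp F hFmono hFbot (m : ℤ) hFtop m 1 le_rfl
      (by push_cast; omega) e2.range inferInstance ?_ ?_
    · rintro g ⟨x, rfl⟩ n v hv
      exact hFinv _ n v hv
    · rintro g ⟨x, rfl⟩ n v hv
      have := x.2 n v hv
      simp only [LinearMap.sub_apply, Module.End.one_apply]
      have hone : ((1:ℕ) : ℤ) = 1 := by norm_num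
      rw [hone]
      exact this
  -- transfer to the range of ϱ
  set Q2 : Subgroup ϱ.range := Subgroup.map ϱ.rangeRestrict Δ with hQ2
  have hQ2fin : Finite Q2 := by
    refine Finite.of_injective (fun x : Q2 => (?_ : e2.range)) ?_
    · refine ⟨((x : ϱ.range) : (V →ₗ[K] V)ˣ), ?_⟩
      obtain ⟨δ, hδ, hx⟩ := x.2
      exact ⟨⟨δ, hδ⟩, by rw [← hx]; rfl⟩
    · intro a b h
      have h' := congrArg Subtype.val h
      simp only [] at h'
      exact Subtype.ext (Subtype.ext h')
  have hmapQ : Finite (ϱ.range ⧸ Q2) := by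
    have hrel : ∀ a b : Γ, QuotientGroup.leftRel Δ a b →
        QuotientGroup.leftRel Q2 (ϱ.rangeRestrict a) (ϱ.rangeRestrict b) := by
      intro a b hab
      refine QuotientGroup.leftRel_apply.mpr ?_
      have hmem := QuotientGroup.leftRel_apply.mp hab
      have : (ϱ.rangeRestrict a)⁻¹ * ϱ.rangeRestrict b = ϱ.rangeRestrict (a⁻¹ * b) := by
        rw [map_mul, map_inv]
      rw [this]
      exact Subgroup.mem_map_of_mem _ hmem
    refine Finite.of_surjective (Quotient.map' ϱ.rangeRestrict hrel) ?_
    intro q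
    induction q using QuotientGroup.induction_on with
    | H x =>
      obtain ⟨γ, hγ⟩ := ϱ.rangeRestrict_surjective x
      refine ⟨QuotientGroup.mk γ, ?_⟩
      show QuotientGroup.mk (ϱ.rangeRestrict γ) = QuotientGroup.mk x
      rw [hγ]
  exact Finite.of_equiv _ (Subgroup.groupEquivQuotientProdSubgroup (s := Q2)).symm
end

section
/- Let k be a number field with ring of integers 𝓞_k and let N be a positive integer. Suppose that for each ring embedding φ : k → ℂ an invertible matrix g_φ ∈ GL_N(ℂ) is given. Then the set of N×N matrices A with entries in 𝓞_k such that, for every embedding φ : k → ℂ, the matrix φ(A) (obtained by applying φ to each entry of A) belongs to g_φ · U_N(ℂ) · g_φ^{-1}, is finite. Here U_N(ℂ) denotes the group of N×N unitary matrices. -/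
/-!
Unitary matrices have operator norm 1, so the entries of `g * U * g⁻¹` are bounded by
`‖g‖ * ‖g⁻¹‖`. Hence every entry of such an `A` is an algebraic integer whose conjugates are all
bounded, and there are only finitely many of those.
-/

open scoped MatrixGroups NumberField

open scoped Matrix.Norms.L2Operator in
theorem Matrix.norm_entry_le_l2_opNorm {𝕜 m n : Type*} [RCLike 𝕜] [Fintype m] [Fintype n]
    [DecidableEq n] (A : Matrix m n 𝕜) (i : m) (j : n) : ‖A i j‖ ≤ ‖A‖ := by
  have h := A.l2_opNorm_mulVec (EuclideanSpace.single j 1)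
  simp only [PiLp.norm_single, norm_one, mul_one] at h
  refine le_trans (le_of_eq_of_le ?_ (PiLp.norm_apply_le _ i)) h
  simp

open scoped Matrix.Norms.L2Operator in
theorem Matrix.exists_norm_entry_mul_unitary_mul_le {𝕜 n : Type*} [RCLike 𝕜] [Fintype n]
    [DecidableEq n] (P Q : Matrix n n 𝕜) :
    ∃ C, ∀ U ∈ Matrix.unitaryGroup n 𝕜, ∀ i j, ‖(P * U * Q) i j‖ ≤ C := by
  refine ⟨‖P‖ * ‖Q‖, fun U hU i j => (norm_entry_le_l2_opNorm _ i j).trans ?_⟩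
  calc ‖P * U * Q‖ ≤ ‖P‖ * ‖U * Q‖ := by rw [mul_assoc]; exact l2_opNorm_mul _ _
    _ = ‖P‖ * ‖Q‖ := by rw [CStarRing.norm_mem_unitary_mul Q hU]

theorem NumberField.finite_setOf_forall_norm_embedding_le (K : Type*) [Field K] [NumberField K]
    (B : (K →+* ℂ) → ℝ) :
    {x : 𝓞 K | ∀ φ : K →+* ℂ, ‖φ (algebraMap (𝓞 K) K x)‖ ≤ B φ}.Finite := by
  obtain ⟨M, hM⟩ := Finite.exists_le B
  refine ((Embeddings.finite_of_norm_le K ℂ M).preimage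
    RingOfIntegers.coe_injective.injOn).subset fun x hx => ?_
  exact ⟨RingOfIntegers.isIntegral_coe x, fun φ => (hx φ).trans (hM φ)⟩

theorem stmt_3_general (k : Type*) [Field k] [NumberField k] (N : ℕ)
    (g : (k →+* ℂ) → GL (Fin N) ℂ) :
    {A : Matrix (Fin N) (Fin N) (𝓞 k) | ∀ φ : k →+* ℂ,
      ∃ U ∈ Matrix.unitaryGroup (Fin N) ℂ,
        A.map (fun x => φ (algebraMap (𝓞 k) k x)) =
          (g φ : Matrix (Fin N) (Fin N) ℂ) * U * (((g φ)⁻¹ : GL (Fin N) ℂ) :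
            Matrix (Fin N) (Fin N) ℂ)}.Finite := by
  choose C hC using fun φ => Matrix.exists_norm_entry_mul_unitary_mul_le
    (g φ : Matrix (Fin N) (Fin N) ℂ) ((g φ)⁻¹ : GL (Fin N) ℂ)
  have hentries := NumberField.finite_setOf_forall_norm_embedding_le k C
  refine (Set.Finite.pi fun _ => Set.Finite.pi fun _ => hentries).subset fun A hA i _ j _ φ => ?_
  obtain ⟨U, hU, hAU⟩ := hA φ
  have hentry : φ (algebraMap (𝓞 k) k (A i j)) = _ := congrFun₂ hAU i j
  exact hentry ▸ hC φ U hU i j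

/-- Let `k` be a number field with ring of integers `𝓞 k` and `N` a positive integer.
Suppose for each ring embedding `φ : k → ℂ` an invertible matrix `g φ ∈ GL_N(ℂ)` is
given. Then the set of `N×N` matrices `A` with entries in `𝓞 k` such that for every
embedding `φ`, the matrix `φ(A)` (apply `φ` entrywise) lies in `g φ · U_N(ℂ) · (g φ)⁻¹`,
is finite. -/
theorem stmt_3 (k : Type*) [Field k] [NumberField k] (N : ℕ) (hN : 0 < N)
    (g : (k →+* ℂ) → GL (Fin N) ℂ) :
    {A : Matrix (Fin N) (Fin N) (𝓞 k) | ∀ φ : k →+* ℂ,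
      ∃ U ∈ Matrix.unitaryGroup (Fin N) ℂ,
        A.map (fun x => φ (algebraMap (𝓞 k) k x)) =
          (g φ : Matrix (Fin N) (Fin N) ℂ) * U * (((g φ)⁻¹ : GL (Fin N) ℂ) :
            Matrix (Fin N) (Fin N) ℂ)}.Finite :=
  stmt_3_general k N g
end
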